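/- Termination of Algorithm 1 on incorrect programs: if prog has an erroneous execution (of some finite thread width w), then Algorithm 1, which at each thread limit k checks whether P_k(prog) ⊨ S_safe and reports 'incorrect' on failure (otherwise checking S_bound and incrementing k on its failure), terminates with output 'incorrect' after at most w iterations, even if prog has infinite thread width. -/
import Mathlib


/-! Core semantics of the concurrent language with fork/join. -/

namespace Conc

abbrev Var := String
abbrev Val := ℤ
/-- Integer-valued expressions (shallow embedding, evaluated in a combined state). -/
abbrev AExp := (Var → Val) → Val
/-- Boolean-valued expressions. -/
abbrev BExp := (Var → Val) → Prop

/-- Commands of the language, parameterized by the type `T` of thread template names. -/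
inductive Cmd (T : Type) where
  | assign : Var → AExp → Cmd T
  | assume_ : BExp → Cmd T
  | assert_ : BExp → Cmd T
  | ite : BExp → Cmd T → Cmd T → Cmd T
  | while_ : BExp → Cmd T → Cmd T
  | fork : AExp → T → Cmd T
  | join : AExp → Cmd T
  | seq : Cmd T → Cmd T → Cmd T

/-- A remainder program: a command, successful termination `Ω`, or failure `↯`. -/
inductive Rem (T : Type) where
  | run : Cmd T → Rem T
  | term : Rem T   -- Ω
  | fail : Rem T   -- ↯

/-- Sequential composition `C ; X` of a command with a remainder, with `C ; Ω = C`. -/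
def Rem.after {T : Type} (C : Cmd T) : Rem T → Rem T
  | .run C' => .run (C.seq C')
  | _ => .run C

/-- A local configuration `⟨X, θ, t, s⟩`. -/
structure LConf (T : Type) where
  rem : Rem T
  tmpl : T
  tid : Option Val
  st : Var → Val

/-- A program: bodies of thread templates, the main template, and the global variables. -/
structure Prog (T : Type) where
  body : T → Cmd T
  main : T
  isGlobal : Var → Bool

/-- Combined state `s ∪ g`. -/
def Prog.comb {T : Type} (P : Prog T) (g s : Var → Val) : Var → Val :=
  fun x => if P.isGlobal x then g x else s x

/-- Kinds of simple statements labelling a step. -/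
inductive Lab (T : Type) where
  | atomic : Lab T
  | forkL : T → Lab T
  | joinL : Lab T

/-- Global configurations: a multiset of local configurations and a global state. -/
abbrev GConf (T : Type) := Multiset (LConf T) × (Var → Val)

/-- The small-step semantic transition relation. -/
inductive Step {T : Type} (P : Prog T) : Lab T → GConf T → GConf T → Prop where
  | assume_ {e : BExp} {X θ t s g} (h : e (P.comb g s)) :
      Step P .atomic ({⟨Rem.after (.assume_ e) X, θ, t, s⟩}, g) ({⟨X, θ, t, s⟩}, g)
  | assignGlobal {x e X θ t s g} (hx : P.isGlobal x = true) :
      Step P .atomic ({⟨Rem.after (.assign x e) X, θ, t, s⟩}, g)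
        ({⟨X, θ, t, s⟩}, Function.update g x (e (P.comb g s)))
  | assignLocal {x e X θ t s g} (hx : P.isGlobal x = false) :
      Step P .atomic ({⟨Rem.after (.assign x e) X, θ, t, s⟩}, g)
        ({⟨X, θ, t, Function.update s x (e (P.comb g s))⟩}, g)
  | assert₁ {e : BExp} {X θ t s g} (h : e (P.comb g s)) :
      Step P .atomic ({⟨Rem.after (.assert_ e) X, θ, t, s⟩}, g) ({⟨X, θ, t, s⟩}, g)
  | assert₂ {e : BExp} {X θ t s g} (h : ¬ e (P.comb g s)) :
      Step P .atomic ({⟨Rem.after (.assert_ e) X, θ, t, s⟩}, g) ({⟨.fail, θ, t, s⟩}, g)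
  | ite₁ {e C₁ C₂ X θ t s g} (h : e (P.comb g s)) :
      Step P .atomic ({⟨Rem.after (.ite e C₁ C₂) X, θ, t, s⟩}, g)
        ({⟨Rem.after C₁ X, θ, t, s⟩}, g)
  | ite₂ {e C₁ C₂ X θ t s g} (h : ¬ e (P.comb g s)) :
      Step P .atomic ({⟨Rem.after (.ite e C₁ C₂) X, θ, t, s⟩}, g)
        ({⟨Rem.after C₂ X, θ, t, s⟩}, g)
  | while₁ {e C X θ t s g} (h : e (P.comb g s)) :
      Step P .atomic ({⟨Rem.after (.while_ e C) X, θ, t, s⟩}, g)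
        ({⟨Rem.after C (Rem.after (.while_ e C) X), θ, t, s⟩}, g)
  | while₂ {e C X θ t s g} (h : ¬ e (P.comb g s)) :
      Step P .atomic ({⟨Rem.after (.while_ e C) X, θ, t, s⟩}, g) ({⟨X, θ, t, s⟩}, g)
  | fork {e θ' X θ t s s' g} :
      Step P (.forkL θ') ({⟨Rem.after (.fork e θ') X, θ, t, s⟩}, g)
        ({⟨X, θ, t, s⟩, ⟨.run (P.body θ'), θ', some (e (P.comb g s)), s'⟩}, g)
  | join {e X θ t s θ' s' g} :
      Step P .joinL
        ({⟨Rem.after (.join e) X, θ, t, s⟩, ⟨.term, θ', some (e (P.comb g s)), s'⟩}, g)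
        ({⟨X, θ, t, s⟩}, g)
  | frame {l M₁ M₁' M₂ g g'} :
      Step P l (M₁, g) (M₁', g') → Step P l (M₁ + M₂, g) (M₁' + M₂, g')

/-- Initial global configurations. -/
def IsInit {T : Type} (P : Prog T) (c : GConf T) : Prop :=
  ∃ s, c.1 = {⟨.run (P.body P.main), P.main, none, s⟩}

/-- `cfg 0 → cfg 1 → … → cfg n` is an execution with statement kinds `lab`. -/
def IsExec {T : Type} (P : Prog T) (n : ℕ) (cfg : ℕ → GConf T) (lab : ℕ → Lab T) : Prop :=
  IsInit P (cfg 0) ∧ ∀ i < n, Step P (lab i) (cfg i) (cfg (i + 1))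

/-- The number of local configurations with thread template `θ` in `M`. -/
def tmplCount {T : Type} [DecidableEq T] (M : Multiset (LConf T)) (θ : T) : ℕ :=
  Multiset.card (M.filter (fun c => c.tmpl = θ))

/-- The thread width of the program `P` is at most `β`. -/
def WidthLe {T : Type} [DecidableEq T] (P : Prog T) (β : ℕ) : Prop :=
  ∀ n cfg lab, IsExec P n cfg lab → ∀ i ≤ n, ∀ θ, tmplCount (cfg i).1 θ ≤ β

/-- `P` is correct: no execution reaches the failure marker `↯`. -/
def Correct {T : Type} (P : Prog T) : Prop :=
  ¬ ∃ n cfg lab, IsExec P n cfg lab ∧ ∃ i ≤ n, ∃ c ∈ (cfg i).1, c.rem = Rem.fail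

end Conc

/-! Petrification: the petrified program `P_β(prog)` as a Petri program. -/

namespace Conc

/-- Places of the petrified program with thread limit `β`. -/
inductive PPlace (T : Type) (β : ℕ) where
  | loc : Rem T → T → Option (Fin β) → PPlace T β
  | inUse : T → Fin β → PPlace T β
  | notInUse : T → Fin β → PPlace T β
  | insuff : T → PPlace T β

/-- Instantiated variables of the petrified program. -/
inductive IVar (T : Type) (β : ℕ) where
  | glob : Var → IVar T β
  | inst : Var → T → Option (Fin β) → IVar T β
  | idv : T → Fin β → IVar T β
deriving DecidableEq

/-- States of the petrified (Petri) program. -/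
abbrev IState (T : Type) (β : ℕ) := IVar T β → Val

/-- De-instantiated view of an instantiated state for thread instance `(θ, k)`. -/
def iev {T : Type} {β : ℕ} (P : Prog T) (σ : IState T β) (θ : T) (k : Option (Fin β)) :
    Var → Val :=
  fun x => if P.isGlobal x then σ (.glob x) else σ (.inst x θ k)

/-- Semantics of the instantiated assignment `[x := e]_{θ,k}`. -/
def assignRel {T : Type} {β : ℕ} [DecidableEq T] (P : Prog T) (x : Var) (e : AExp)
    (θ : T) (k : Option (Fin β)) : IState T β → IState T β → Prop :=
  fun σ σ' =>
    σ' = if P.isGlobal x then Function.update σ (.glob x) (e (iev P σ θ k))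
         else Function.update σ (.inst x θ k) (e (iev P σ θ k))

/-- Semantics of the instantiated statement `[assume e]_{θ,k}`. -/
def assumeRel {T : Type} {β : ℕ} (P : Prog T) (e : BExp) (θ : T) (k : Option (Fin β)) :
    IState T β → IState T β → Prop :=
  fun σ σ' => σ' = σ ∧ e (iev P σ θ k)

/-- Semantics of the fork label `id_{θ'}^{k'} := [e]_{θ,k}`. -/
def forkRel {T : Type} {β : ℕ} [DecidableEq T] (P : Prog T) (e : AExp)
    (θ : T) (k : Option (Fin β)) (θ' : T) (k' : Fin β) : IState T β → IState T β → Prop :=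
  fun σ σ' => σ' = Function.update σ (.idv θ' k') (e (iev P σ θ k))

/-- Semantics of the join label `assume id_{θ'}^{k'} == [e]_{θ,k}`. -/
def joinRel {T : Type} {β : ℕ} (P : Prog T) (e : AExp)
    (θ : T) (k : Option (Fin β)) (θ' : T) (k' : Fin β) : IState T β → IState T β → Prop :=
  fun σ σ' => σ' = σ ∧ σ (.idv θ' k') = e (iev P σ θ k)

/-- The control-flow relation of petrification: `pre ⟶[R] post`, where transitions are
labelled with the semantic relation `R` of their instantiated simple statement. -/
inductive PTrans {T : Type} {β : ℕ} [DecidableEq T] (P : Prog T) :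
    Set (PPlace T β) → (IState T β → IState T β → Prop) → Set (PPlace T β) → Prop where
  | assume_ (e : BExp) (X : Rem T) (θ : T) (k : Option (Fin β)) :
      PTrans P {.loc (Rem.after (.assume_ e) X) θ k} (assumeRel P e θ k) {.loc X θ k}
  | assign (x : Var) (e : AExp) (X : Rem T) (θ : T) (k : Option (Fin β)) :
      PTrans P {.loc (Rem.after (.assign x e) X) θ k} (assignRel P x e θ k) {.loc X θ k}
  | assert₁ (e : BExp) (X : Rem T) (θ : T) (k : Option (Fin β)) :
      PTrans P {.loc (Rem.after (.assert_ e) X) θ k} (assumeRel P e θ k) {.loc X θ k}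
  | assert₂ (e : BExp) (X : Rem T) (θ : T) (k : Option (Fin β)) :
      PTrans P {.loc (Rem.after (.assert_ e) X) θ k}
        (assumeRel P (fun v => ¬ e v) θ k) {.loc Rem.fail θ k}
  | ite₁ (e : BExp) (C₁ C₂ : Cmd T) (X : Rem T) (θ : T) (k : Option (Fin β)) :
      PTrans P {.loc (Rem.after (.ite e C₁ C₂) X) θ k} (assumeRel P e θ k)
        {.loc (Rem.after C₁ X) θ k}
  | ite₂ (e : BExp) (C₁ C₂ : Cmd T) (X : Rem T) (θ : T) (k : Option (Fin β)) :
      PTrans P {.loc (Rem.after (.ite e C₁ C₂) X) θ k} (assumeRel P (fun v => ¬ e v) θ k)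
        {.loc (Rem.after C₂ X) θ k}
  | while₁ (e : BExp) (C : Cmd T) (X : Rem T) (θ : T) (k : Option (Fin β)) :
      PTrans P {.loc (Rem.after (.while_ e C) X) θ k} (assumeRel P e θ k)
        {.loc (Rem.after C (Rem.after (.while_ e C) X)) θ k}
  | while₂ (e : BExp) (C : Cmd T) (X : Rem T) (θ : T) (k : Option (Fin β)) :
      PTrans P {.loc (Rem.after (.while_ e C) X) θ k} (assumeRel P (fun v => ¬ e v) θ k)
        {.loc X θ k}
  | fork (e : AExp) (θ' : T) (X : Rem T) (θ : T) (k : Option (Fin β)) (k' : Fin β) :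
      PTrans P
        ({.loc (Rem.after (.fork e θ') X) θ k, .notInUse θ' k'} ∪
          (PPlace.inUse θ') '' {j | j < k'})
        (forkRel P e θ k θ' k')
        ({.loc X θ k, .loc (.run (P.body θ')) θ' (some k'), .inUse θ' k'} ∪
          (PPlace.inUse θ') '' {j | j < k'})
  | insufficiency (e : AExp) (θ' : T) (X : Rem T) (θ : T) (k : Option (Fin β)) :
      PTrans P
        ({.loc (Rem.after (.fork e θ') X) θ k} ∪ (PPlace.inUse θ') '' Set.univ)
        (fun σ σ' => σ' = σ)
        {.insuff θ'}
  | join (e : AExp) (X : Rem T) (θ : T) (k : Option (Fin β)) (θ' : T) (k' : Fin β) :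
      PTrans P {.loc (Rem.after (.join e) X) θ k, .loc Rem.term θ' (some k'), .inUse θ' k'}
        (joinRel P e θ k θ' k')
        {.loc X θ k, .notInUse θ' k'}

/-- Initial marking of the petrified program. -/
def initMark {T : Type} (P : Prog T) (β : ℕ) : Set (PPlace T β) :=
  {PPlace.loc (.run (P.body P.main)) P.main none} ∪ {p | ∃ θ k, p = PPlace.notInUse θ k}

/-- Reachability of a marking together with a semantically consistent state
(markings of the 1-safe petrified program are identified with sets of places). -/
inductive PReach {T : Type} [DecidableEq T] (P : Prog T) (β : ℕ) :
    Set (PPlace T β) → IState T β → Prop where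
  | init (σ : IState T β) : PReach P β (initMark P β) σ
  | step {m σ pre R post σ'} : PReach P β m σ → PTrans P pre R post → pre ⊆ m →
      R σ σ' → PReach P β ((m \ pre) ∪ post) σ'

/-- The petrified program satisfies the specification `S` (a set of bad places):
no semantically executable firing sequence reaches a marking intersecting `S`. -/
def Satisfies {T : Type} [DecidableEq T] (P : Prog T) (β : ℕ) (S : Set (PPlace T β)) : Prop :=
  ¬ ∃ m σ, PReach P β m σ ∧ (m ∩ S).Nonempty

/-- The safety specification `S_safe`. -/
def Ssafe (T : Type) (β : ℕ) : Set (PPlace T β) :=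
  {p | ∃ θ k, p = PPlace.loc Rem.fail θ k}

/-- The bound specification `S_bound`. -/
def Sbound (T : Type) (β : ℕ) : Set (PPlace T β) :=
  {p | ∃ θ, p = PPlace.insuff θ}

end Conc
namespace Conc

open scoped Classical
set_option linter.unusedSectionVars false

variable {T : Type} [DecidableEq T]

/-- Base steps: the semantics without the frame rule. -/
inductive BStep (P : Prog T) : Lab T → GConf T → GConf T → Prop where
  | assume_ {e : BExp} {X θ t s g} (h : e (P.comb g s)) :
      BStep P .atomic ({⟨Rem.after (.assume_ e) X, θ, t, s⟩}, g) ({⟨X, θ, t, s⟩}, g)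
  | assignGlobal {x e X θ t s g} (hx : P.isGlobal x = true) :
      BStep P .atomic ({⟨Rem.after (.assign x e) X, θ, t, s⟩}, g)
        ({⟨X, θ, t, s⟩}, Function.update g x (e (P.comb g s)))
  | assignLocal {x e X θ t s g} (hx : P.isGlobal x = false) :
      BStep P .atomic ({⟨Rem.after (.assign x e) X, θ, t, s⟩}, g)
        ({⟨X, θ, t, Function.update s x (e (P.comb g s))⟩}, g)
  | assert₁ {e : BExp} {X θ t s g} (h : e (P.comb g s)) :
      BStep P .atomic ({⟨Rem.after (.assert_ e) X, θ, t, s⟩}, g) ({⟨X, θ, t, s⟩}, g)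
  | assert₂ {e : BExp} {X θ t s g} (h : ¬ e (P.comb g s)) :
      BStep P .atomic ({⟨Rem.after (.assert_ e) X, θ, t, s⟩}, g) ({⟨.fail, θ, t, s⟩}, g)
  | ite₁ {e C₁ C₂ X θ t s g} (h : e (P.comb g s)) :
      BStep P .atomic ({⟨Rem.after (.ite e C₁ C₂) X, θ, t, s⟩}, g)
        ({⟨Rem.after C₁ X, θ, t, s⟩}, g)
  | ite₂ {e C₁ C₂ X θ t s g} (h : ¬ e (P.comb g s)) :
      BStep P .atomic ({⟨Rem.after (.ite e C₁ C₂) X, θ, t, s⟩}, g)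
        ({⟨Rem.after C₂ X, θ, t, s⟩}, g)
  | while₁ {e C X θ t s g} (h : e (P.comb g s)) :
      BStep P .atomic ({⟨Rem.after (.while_ e C) X, θ, t, s⟩}, g)
        ({⟨Rem.after C (Rem.after (.while_ e C) X), θ, t, s⟩}, g)
  | while₂ {e C X θ t s g} (h : ¬ e (P.comb g s)) :
      BStep P .atomic ({⟨Rem.after (.while_ e C) X, θ, t, s⟩}, g) ({⟨X, θ, t, s⟩}, g)
  | fork {e θ' X θ t s s' g} :
      BStep P (.forkL θ') ({⟨Rem.after (.fork e θ') X, θ, t, s⟩}, g)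
        ({⟨X, θ, t, s⟩, ⟨.run (P.body θ'), θ', some (e (P.comb g s)), s'⟩}, g)
  | join {e X θ t s θ' s' g} :
      BStep P .joinL
        ({⟨Rem.after (.join e) X, θ, t, s⟩, ⟨.term, θ', some (e (P.comb g s)), s'⟩}, g)
        ({⟨X, θ, t, s⟩}, g)

lemma step_flat {P : Prog T} {l : Lab T} {c c' : GConf T} (h : Step P l c c') :
    ∃ M₁ M₁' F, c.1 = M₁ + F ∧ c'.1 = M₁' + F ∧ BStep P l (M₁, c.2) (M₁', c'.2) := by
  induction h with
  | assume_ h => exact ⟨_, _, 0, (add_zero _).symm, (add_zero _).symm, BStep.assume_ h⟩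
  | assignGlobal hx => exact ⟨_, _, 0, (add_zero _).symm, (add_zero _).symm, BStep.assignGlobal hx⟩
  | assignLocal hx => exact ⟨_, _, 0, (add_zero _).symm, (add_zero _).symm, BStep.assignLocal hx⟩
  | assert₁ h => exact ⟨_, _, 0, (add_zero _).symm, (add_zero _).symm, BStep.assert₁ h⟩
  | assert₂ h => exact ⟨_, _, 0, (add_zero _).symm, (add_zero _).symm, BStep.assert₂ h⟩
  | ite₁ h => exact ⟨_, _, 0, (add_zero _).symm, (add_zero _).symm, BStep.ite₁ h⟩
  | ite₂ h => exact ⟨_, _, 0, (add_zero _).symm, (add_zero _).symm, BStep.ite₂ h⟩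
  | while₁ h => exact ⟨_, _, 0, (add_zero _).symm, (add_zero _).symm, BStep.while₁ h⟩
  | while₂ h => exact ⟨_, _, 0, (add_zero _).symm, (add_zero _).symm, BStep.while₂ h⟩
  | fork => exact ⟨_, _, 0, (add_zero _).symm, (add_zero _).symm, BStep.fork⟩
  | join => exact ⟨_, _, 0, (add_zero _).symm, (add_zero _).symm, BStep.join⟩
  | frame hs ih =>
      rename_i l' M₁ M₁' M₂ g g'
      obtain ⟨A, A', F₀, h1, h2, hb⟩ := ih
      exact ⟨A, A', F₀ + M₂, by simpa [add_assoc] using congrArg (· + M₂) h1,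
        by simpa [add_assoc] using congrArg (· + M₂) h2, hb⟩

lemma after_term_eq_fail (C : Cmd T) : Rem.after C Rem.term = Rem.after C Rem.fail := rfl

lemma after_ne_term (C : Cmd T) (X : Rem T) : Rem.after C X ≠ Rem.term := by
  cases X <;> simp [Rem.after]

/-- The marking associated with a decorated multiset of local configurations. -/
def markOf {β : ℕ} (N : Multiset (LConf T × Option (Fin β))) : Set (PPlace T β) := fun p =>
  match p with
  | .loc X θ k => ∃ d ∈ N, d.1.rem = X ∧ d.1.tmpl = θ ∧ d.2 = k
  | .inUse θ k => (θ, some k) ∈ N.map (fun d => (d.1.tmpl, d.2))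
  | .notInUse θ k => (θ, some k) ∉ N.map (fun d => (d.1.tmpl, d.2))
  | .insuff _ => False

lemma mem_markOf_loc {β : ℕ} {N : Multiset (LConf T × Option (Fin β))} {X θ k} :
    PPlace.loc X θ k ∈ markOf N ↔ ∃ d ∈ N, d.1.rem = X ∧ d.1.tmpl = θ ∧ d.2 = k := Iff.rfl

lemma mem_markOf_inUse {β : ℕ} {N : Multiset (LConf T × Option (Fin β))} {θ k} :
    PPlace.inUse θ k ∈ markOf N ↔ (θ, some k) ∈ N.map (fun d => (d.1.tmpl, d.2)) := Iff.rfl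

lemma mem_markOf_notInUse {β : ℕ} {N : Multiset (LConf T × Option (Fin β))} {θ k} :
    PPlace.notInUse θ k ∈ markOf N ↔ (θ, some k) ∉ N.map (fun d => (d.1.tmpl, d.2)) := Iff.rfl

lemma mem_markOf_insuff {β : ℕ} {N : Multiset (LConf T × Option (Fin β))} {θ} :
    PPlace.insuff θ ∈ markOf N ↔ False := Iff.rfl

lemma mark_init {β : ℕ} (P : Prog T) (s : Var → Val) :
    markOf ({((⟨.run (P.body P.main), P.main, none, s⟩ : LConf T), (none : Option (Fin β)))} :
      Multiset (LConf T × Option (Fin β))) = initMark P β := by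
  ext p
  cases p with
  | loc X θ k =>
      simp only [mem_markOf_loc, initMark, Set.mem_union, Set.mem_singleton_iff, Set.mem_setOf_eq]
      constructor
      · rintro ⟨d, hd, h1, h2, h3⟩
        rw [Multiset.mem_singleton] at hd
        subst hd; subst h1; subst h2; subst h3
        left; rfl
      · rintro (h | ⟨θ', k', h⟩)
        · obtain ⟨h1, h2, h3⟩ := PPlace.loc.inj h
          subst h1; subst h2; subst h3
          exact ⟨_, Multiset.mem_singleton_self _, rfl, rfl, rfl⟩
        · exact absurd h (by simp)
  | inUse θ k => simp [mem_markOf_inUse, initMark]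
  | notInUse θ k => simp [mem_markOf_notInUse, initMark]
  | insuff θ => simp [mem_markOf_insuff, initMark]

lemma map_fst_cons_decomp {β : ℕ} {N : Multiset (LConf T × Option (Fin β))}
    {a : LConf T} {F : Multiset (LConf T)} (h : N.map Prod.fst = a ::ₘ F) :
    ∃ k N₀, N = (a, k) ::ₘ N₀ ∧ N₀.map Prod.fst = F := by
  have ha : a ∈ N.map Prod.fst := by rw [h]; exact Multiset.mem_cons_self _ _
  obtain ⟨d, hd, hda⟩ := Multiset.mem_map.1 ha
  refine ⟨d.2, N.erase d, ?_, ?_⟩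
  · rw [← hda]; rw [Multiset.cons_erase hd]
  · have h2 : N = d ::ₘ N.erase d := (Multiset.cons_erase hd).symm
    rw [h2, Multiset.map_cons, hda] at h
    exact (Multiset.cons_inj_right _).1 h

end Conc
namespace Conc
open scoped Classical
set_option linter.unusedSectionVars false
variable {T : Type} [DecidableEq T]

lemma mark_local {β : ℕ} {c c' : LConf T} {kh : Option (Fin β)}
    {N₀ : Multiset (LConf T × Option (Fin β))}
    (htm : c'.tmpl = c.tmpl)
    (hf : (c.tmpl, kh) ∉ N₀.map (fun d => (d.1.tmpl, d.2))) :
    (markOf ((c, kh) ::ₘ N₀) \ {PPlace.loc c.rem c.tmpl kh}) ∪ {PPlace.loc c'.rem c'.tmpl kh}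
      = markOf ((c', kh) ::ₘ N₀) := by
  ext p
  simp only [Set.mem_union, Set.mem_diff, Set.mem_singleton_iff]
  cases p with
  | loc X θ k =>
      simp only [mem_markOf_loc, Multiset.mem_cons]
      constructor
      · rintro (⟨⟨d, (rfl | hd), h1, h2, h3⟩, hne⟩ | h)
        · subst h1; subst h2; subst h3; exact absurd rfl hne
        · exact ⟨d, Or.inr hd, h1, h2, h3⟩
        · obtain ⟨e1, e2, e3⟩ := PPlace.loc.inj h
          exact ⟨(c', kh), Or.inl rfl, e1.symm, e2.symm, e3.symm⟩
      · rintro ⟨d, (rfl | hd), h1, h2, h3⟩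
        · exact Or.inr (by rw [← h1, ← h2, ← h3])
        · refine Or.inl ⟨⟨d, Or.inr hd, h1, h2, h3⟩, fun he => ?_⟩
          obtain ⟨e1, e2, e3⟩ := PPlace.loc.inj he
          exact hf (Multiset.mem_map.2 ⟨d, hd, by rw [h2, e2, h3, e3]⟩)
  | inUse θ k =>
      simp only [mem_markOf_inUse, Multiset.map_cons, Multiset.mem_cons]
      constructor
      · rintro (⟨h, -⟩ | h)
        · rwa [htm]
        · exact absurd h (by simp)
      · intro h; exact Or.inl ⟨by rwa [htm] at h, by simp⟩
  | notInUse θ k =>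
      simp only [mem_markOf_notInUse, Multiset.map_cons, Multiset.mem_cons]
      constructor
      · rintro (⟨h, -⟩ | h)
        · rwa [htm]
        · exact absurd h (by simp)
      · intro h; exact Or.inl ⟨by rwa [htm] at h, by simp⟩
  | insuff θ =>
      simp only [mem_markOf_insuff]
      constructor
      · rintro (⟨h, -⟩ | h)
        · exact h
        · exact absurd h (by simp)
      · exact fun h => h.elim

lemma mark_fork {β : ℕ} {c c' cn : LConf T} {kh : Option (Fin β)} {k' : Fin β} {θ' : T}
    {N₀ : Multiset (LConf T × Option (Fin β))}
    (htm : c'.tmpl = c.tmpl) (htn : cn.tmpl = θ')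
    (hf : (c.tmpl, kh) ∉ N₀.map (fun d => (d.1.tmpl, d.2)))
    (hlt : ∀ j : Fin β, j < k' →
      (θ', some j) ∈ ((c, kh) ::ₘ N₀).map (fun d => (d.1.tmpl, d.2))) :
    (markOf ((c, kh) ::ₘ N₀) \
        ({PPlace.loc c.rem c.tmpl kh, PPlace.notInUse θ' k'} ∪
          (PPlace.inUse θ') '' {j | j < k'}))
      ∪ ({PPlace.loc c'.rem c'.tmpl kh, PPlace.loc cn.rem θ' (some k'), PPlace.inUse θ' k'} ∪
          (PPlace.inUse θ') '' {j | j < k'})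
      = markOf ((c', kh) ::ₘ (cn, some k') ::ₘ N₀) := by
  ext p
  simp only [Set.mem_union, Set.mem_diff, Set.mem_singleton_iff, Set.mem_insert_iff,
    Set.mem_image, Set.mem_setOf_eq]
  cases p with
  | loc X θ k =>
      simp only [mem_markOf_loc, Multiset.mem_cons]
      constructor
      · rintro (⟨⟨d, (rfl | hd), h1, h2, h3⟩, hne⟩ | ((h | h | h) | ⟨j, hj, h⟩))
        · subst h1; subst h2; subst h3; exact absurd (Or.inl (Or.inl rfl)) hne
        · exact ⟨d, Or.inr (Or.inr hd), h1, h2, h3⟩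
        · obtain ⟨e1, e2, e3⟩ := PPlace.loc.inj h
          exact ⟨(c', kh), Or.inl rfl, e1.symm, e2.symm, e3.symm⟩
        · obtain ⟨e1, e2, e3⟩ := PPlace.loc.inj h
          exact ⟨(cn, some k'), Or.inr (Or.inl rfl), e1.symm, e2.symm ▸ htn, e3.symm⟩
        · exact absurd h (by simp)
        · exact absurd h (by simp)
      · rintro ⟨d, (rfl | rfl | hd), h1, h2, h3⟩
        · exact Or.inr (Or.inl (Or.inl (by rw [← h1, ← h2, ← h3])))
        · exact Or.inr (Or.inl (Or.inr (Or.inl (by rw [← h1, ← h3, ← h2, htn]))))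
        · refine Or.inl ⟨⟨d, Or.inr hd, h1, h2, h3⟩, ?_⟩
          rintro ((he | he) | ⟨j, hj, he⟩)
          · obtain ⟨e1, e2, e3⟩ := PPlace.loc.inj he
            exact hf (Multiset.mem_map.2 ⟨d, hd, by rw [h2, e2, h3, e3]⟩)
          · exact absurd he (by simp)
          · exact absurd he (by simp)
  | inUse θ k =>
      simp only [mem_markOf_inUse, Multiset.map_cons, Multiset.mem_cons]
      constructor
      · rintro (⟨h, -⟩ | ((h | h | h) | ⟨j, hj, h⟩))
        · rcases h with h | h
          · exact Or.inl (by rw [htm]; exact h)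
          · exact Or.inr (Or.inr h)
        · exact absurd h (by simp)
        · exact absurd h (by simp)
        · obtain ⟨e1, e2⟩ := PPlace.inUse.inj h
          refine Or.inr (Or.inl ?_)
          rw [htn, ← e1, ← e2]
        · obtain ⟨e1, e2⟩ := PPlace.inUse.inj h
          have hm := hlt j hj
          simp only [Multiset.map_cons, Multiset.mem_cons] at hm
          rcases hm with hm | hm
          · exact Or.inl (by rw [htm, ← e1, ← e2]; exact hm)
          · exact Or.inr (Or.inr (by rw [← e1, ← e2]; exact hm))
      · rintro (h | h | h)
        · by_cases hp : θ = θ' ∧ k < k'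
          · exact Or.inr (Or.inr ⟨k, hp.2, by rw [hp.1]⟩)
          · refine Or.inl ⟨Or.inl (by rwa [htm] at h), ?_⟩
            rintro ((he | he) | ⟨j, hj, he⟩)
            · exact absurd he (by simp)
            · exact absurd he (by simp)
            · obtain ⟨e1, e2⟩ := PPlace.inUse.inj he
              exact hp ⟨e1.symm, e2 ▸ hj⟩
        · obtain ⟨e1, e2⟩ := Prod.mk.inj h
          obtain rfl := Option.some.inj e2
          exact Or.inr (Or.inl (Or.inr (Or.inr (by rw [e1, htn]))))
        · by_cases hp : θ = θ' ∧ k < k'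
          · exact Or.inr (Or.inr ⟨k, hp.2, by rw [hp.1]⟩)
          · refine Or.inl ⟨Or.inr h, ?_⟩
            rintro ((he | he) | ⟨j, hj, he⟩)
            · exact absurd he (by simp)
            · exact absurd he (by simp)
            · obtain ⟨e1, e2⟩ := PPlace.inUse.inj he
              exact hp ⟨e1.symm, e2 ▸ hj⟩
  | notInUse θ k =>
      simp only [mem_markOf_notInUse, Multiset.map_cons, Multiset.mem_cons]
      constructor
      · rintro (⟨h, hne⟩ | ((he | he | he) | ⟨j, hj, he⟩))
        · rintro (he | he | he)
          · exact h (Or.inl (by rwa [htm] at he))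
          · obtain ⟨e1, e2⟩ := Prod.mk.inj he
            obtain rfl := Option.some.inj e2
            exact hne (Or.inl (Or.inr (by rw [e1, htn])))
          · exact h (Or.inr he)
        · exact absurd he (by simp)
        · exact absurd he (by simp)
        · exact absurd he (by simp)
        · exact absurd he (by simp)
      · intro h
        refine Or.inl ⟨?_, ?_⟩
        · rintro (he | he)
          · exact h (Or.inl (by rwa [htm]))
          · exact h (Or.inr (Or.inr he))
        · rintro ((he | he) | ⟨j, hj, he⟩)
          · exact absurd he (by simp)
          · obtain ⟨e1, e2⟩ := PPlace.notInUse.inj he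
            exact h (Or.inr (Or.inl (by rw [htn, ← e1, ← e2])))
          · exact absurd he (by simp)
  | insuff θ =>
      simp only [mem_markOf_insuff]
      constructor
      · rintro (⟨h, -⟩ | ((he | he | he) | ⟨j, hj, he⟩))
        · exact h
        · exact absurd he (by simp)
        · exact absurd he (by simp)
        · exact absurd he (by simp)
        · exact absurd he (by simp)
      · exact fun h => h.elim

end Conc
namespace Conc
set_option linter.unusedSectionVars false
variable {T : Type} [DecidableEq T]

/-- The simulation invariant between a global configuration `(M, g)` of the concrete
program and a state `σ` of the petrified program, via a decorated multiset `N`. -/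
structure SimInv (P : Prog T) (β : ℕ) (M : Multiset (LConf T)) (g : Var → Val)
    (σ : IState T β) (N : Multiset (LConf T × Option (Fin β)))
    (σfree : Var → T → Fin β → Val) (cα : T → ℕ) : Prop where
  hM : N.map Prod.fst = M
  hnd : (N.map (fun d => (d.1.tmpl, d.2))).Nodup
  hkeys : ∀ θ (k : Fin β), (θ, some k) ∈ N.map (fun d => (d.1.tmpl, d.2)) ↔ (k : ℕ) < cα θ
  hstate : ∀ d ∈ N, ∀ x, iev P σ d.1.tmpl d.2 x = P.comb g d.1.st x
  hfresh : ∀ x θ (k : Fin β), cα θ ≤ (k : ℕ) → σ (.inst x θ (some k)) = σfree x θ k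
  hnt : ∀ d ∈ N, d.1.rem ≠ Rem.term

lemma sim_divert {β : ℕ} {P : Prog T} {m : Set (PPlace T β)} {σ σ' : IState T β}
    {r : Rem T} {θ : T} {kh : Option (Fin β)} {R : IState T β → IState T β → Prop}
    (hreach : PReach P β m σ)
    (htr : PTrans P {PPlace.loc r θ kh} R {PPlace.loc Rem.fail θ kh})
    (hmem : PPlace.loc r θ kh ∈ m) (hR : R σ σ') :
    ∃ m' σ'', PReach P β m' σ'' ∧ (m' ∩ Ssafe T β).Nonempty :=
  ⟨_, σ', PReach.step hreach htr (fun p hp => by rwa [Set.mem_singleton_iff.1 hp]) hR,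
    ⟨PPlace.loc Rem.fail θ kh, Set.mem_union_right _ rfl, θ, kh, rfl⟩⟩

lemma sim_local {β : ℕ} {P : Prog T} {g g' : Var → Val} {σ σ' : IState T β}
    {σfree : Var → T → Fin β → Val} {cα : T → ℕ} {C : Cmd T} {X : Rem T} {θ : T}
    {t : Option Val} {s s' : Var → Val} {r' : Rem T} {kh : Option (Fin β)}
    {N₀ : Multiset (LConf T × Option (Fin β))} {F : Multiset (LConf T)}
    {R : IState T β → IState T β → Prop}
    (hreach : PReach P β (markOf ((⟨Rem.after C X, θ, t, s⟩, kh) ::ₘ N₀)) σ)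
    (hinv : SimInv P β ((⟨Rem.after C X, θ, t, s⟩ : LConf T) ::ₘ F) g σ
        ((⟨Rem.after C X, θ, t, s⟩, kh) ::ₘ N₀) σfree cα)
    (htr : PTrans P {PPlace.loc (Rem.after C X) θ kh} R {PPlace.loc r' θ kh})
    (hR : R σ σ')
    (hr' : r' ≠ Rem.term)
    (hglob : ∀ x, P.isGlobal x = true → σ' (.glob x) = g' x)
    (hself : ∀ x, P.isGlobal x = false → σ' (.inst x θ kh) = s' x)
    (hother : ∀ x θ'' k'', (θ'', k'') ≠ (θ, kh) → σ' (.inst x θ'' k'') = σ (.inst x θ'' k'')) :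
    PReach P β (markOf ((⟨r', θ, t, s'⟩, kh) ::ₘ N₀)) σ' ∧
      SimInv P β ((⟨r', θ, t, s'⟩ : LConf T) ::ₘ F) g' σ' ((⟨r', θ, t, s'⟩, kh) ::ₘ N₀)
        σfree cα := by
  have hf : (θ, kh) ∉ N₀.map (fun d => (d.1.tmpl, d.2)) := by
    have h := hinv.hnd
    rw [Multiset.map_cons] at h
    exact (Multiset.nodup_cons.1 (by simpa using h)).1
  have hF : N₀.map Prod.fst = F := by
    have h := hinv.hM
    rw [Multiset.map_cons] at h
    exact (Multiset.cons_inj_right (⟨Rem.after C X, θ, t, s⟩ : LConf T)).1 (by simpa using h)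
  have hpre : {PPlace.loc (Rem.after C X) θ kh} ⊆
      markOf ((⟨Rem.after C X, θ, t, s⟩, kh) ::ₘ N₀) := by
    intro p hp
    rw [Set.mem_singleton_iff.1 hp]
    exact mem_markOf_loc.2 ⟨(⟨Rem.after C X, θ, t, s⟩, kh), Multiset.mem_cons_self _ _, rfl, rfl, rfl⟩
  have hstep := PReach.step hreach htr hpre hR
  have hmark : (markOf ((⟨Rem.after C X, θ, t, s⟩, kh) ::ₘ N₀) \
        {PPlace.loc (Rem.after C X) θ kh}) ∪ {PPlace.loc r' θ kh}
      = markOf ((⟨r', θ, t, s'⟩, kh) ::ₘ N₀) :=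
    mark_local (c := ⟨Rem.after C X, θ, t, s⟩) (c' := ⟨r', θ, t, s'⟩) rfl hf
  rw [hmark] at hstep
  refine ⟨hstep, ?_⟩
  constructor
  · simp [hF]
  · have h := hinv.hnd
    simp only [Multiset.map_cons] at h ⊢
    simpa using h
  · intro θ₀ k₀
    have h := hinv.hkeys θ₀ k₀
    simp only [Multiset.map_cons, Multiset.mem_cons] at h ⊢
    exact h
  · intro d hd x
    rcases Multiset.mem_cons.1 hd with rfl | hd
    · show iev P σ' θ kh x = P.comb g' s' x
      unfold iev Prog.comb
      by_cases hx : P.isGlobal x = true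
      · simp only [hx, if_true]
        exact hglob x hx
      · have hx' : P.isGlobal x = false := by simpa using hx
        simp only [hx', Bool.false_eq_true, if_false]
        exact hself x hx'
    · have hkey : (d.1.tmpl, d.2) ≠ (θ, kh) := fun he =>
        hf (by rw [← he]; exact Multiset.mem_map.2 ⟨d, hd, rfl⟩)
      have hold := hinv.hstate d (Multiset.mem_cons_of_mem hd) x
      unfold iev Prog.comb at hold ⊢
      by_cases hx : P.isGlobal x = true
      · simp only [hx, if_true] at hold ⊢
        exact hglob x hx
      · have hx' : P.isGlobal x = false := by simpa using hx
        simp only [hx', Bool.false_eq_true, if_false] at hold ⊢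
        rw [hother x d.1.tmpl d.2 hkey, hold]
  · intro x θ₀ k₀ hk
    have hne : (θ₀, some k₀) ≠ (θ, kh) := by
      intro he
      have : ((k₀ : ℕ)) < cα θ₀ := (hinv.hkeys θ₀ k₀).1 (by rw [he]; simp)
      omega
    rw [hother x θ₀ (some k₀) hne]
    exact hinv.hfresh x θ₀ k₀ hk
  · intro d hd
    rcases Multiset.mem_cons.1 hd with rfl | hd
    · exact hr'
    · exact hinv.hnt d (Multiset.mem_cons_of_mem hd)

lemma count_ge {β : ℕ} {N : Multiset (LConf T × Option (Fin β))} {θ' : T}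
    (hnd : (N.map (fun d => (d.1.tmpl, d.2))).Nodup)
    (hall : ∀ k : Fin β, (θ', some k) ∈ N.map (fun d => (d.1.tmpl, d.2))) :
    β ≤ tmplCount (N.map Prod.fst) θ' := by
  have hinj : Function.Injective (fun k : Fin β => ((θ', some k) : T × Option (Fin β))) := by
    intro a b h
    simpa using h
  have h1 : (Finset.univ.val.map fun k : Fin β => ((θ', some k) : T × Option (Fin β))) ≤
      N.map (fun d => (d.1.tmpl, d.2)) := by
    rw [Multiset.le_iff_count]
    intro a
    by_cases ha : a ∈ Finset.univ.val.map fun k : Fin β => ((θ', some k) : T × Option (Fin β))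
    · refine le_trans (Multiset.nodup_iff_count_le_one.1 (Finset.univ.nodup.map hinj) a) ?_
      refine Multiset.one_le_count_iff_mem.2 ?_
      obtain ⟨k, -, rfl⟩ := Multiset.mem_map.1 ha
      exact hall k
    · rw [Multiset.count_eq_zero_of_notMem ha]
      exact Nat.zero_le _
  have h2 := Multiset.card_le_card
    (Multiset.filter_le_filter (fun κ : T × Option (Fin β) => κ.1 = θ') h1)
  have e1 : Multiset.filter (fun κ : T × Option (Fin β) => κ.1 = θ')
      (Finset.univ.val.map fun k : Fin β => ((θ', some k) : T × Option (Fin β)))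
      = Finset.univ.val.map fun k : Fin β => ((θ', some k) : T × Option (Fin β)) := by
    rw [Multiset.filter_eq_self]
    rintro a ha
    obtain ⟨k, -, rfl⟩ := Multiset.mem_map.1 ha
    rfl
  rw [e1] at h2
  have e2 : Multiset.card (Finset.univ.val.map fun k : Fin β =>
      ((θ', some k) : T × Option (Fin β))) = β := by simp
  rw [e2] at h2
  refine le_trans h2 (le_of_eq ?_)
  unfold tmplCount
  rw [← Multiset.countP_eq_card_filter, ← Multiset.countP_eq_card_filter,
    Multiset.countP_map, Multiset.countP_map]

end Conc
namespace Conc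
open scoped Classical
set_option linter.unusedSectionVars false
set_option linter.unusedVariables false
set_option maxHeartbeats 2000000
variable {T : Type} [DecidableEq T]

/-- Number of fork-θ steps among the first `i` steps. -/
noncomputable def cnt (lab : ℕ → Lab T) (θ : T) : ℕ → ℕ
  | 0 => 0
  | (i+1) => cnt lab θ i + if lab i = Lab.forkL θ then 1 else 0

lemma cnt_succ (lab : ℕ → Lab T) (θ : T) (i : ℕ) :
    cnt lab θ (i+1) = cnt lab θ i + if lab i = Lab.forkL θ then 1 else 0 := rfl

lemma cnt_succ_eq {lab : ℕ → Lab T} {i : ℕ} (hl : ∀ θ, lab i ≠ Lab.forkL θ) :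
    (fun θ => cnt lab θ (i+1)) = fun θ => cnt lab θ i :=
  funext fun θ => by rw [cnt_succ, if_neg (hl θ), add_zero]

lemma glob_of_state {β : ℕ} {P : Prog T} {σ : IState T β} {g st : Var → Val} {θ : T}
    {kh : Option (Fin β)} (h : ∀ x, iev P σ θ kh x = P.comb g st x) :
    ∀ x, P.isGlobal x = true → σ (IVar.glob x) = g x := by
  intro x hx
  have hh := h x
  unfold iev Prog.comb at hh
  simpa [hx] using hh

lemma loc_of_state {β : ℕ} {P : Prog T} {σ : IState T β} {g st : Var → Val} {θ : T}
    {kh : Option (Fin β)} (h : ∀ x, iev P σ θ kh x = P.comb g st x) :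
    ∀ x, P.isGlobal x = false → σ (IVar.inst x θ kh) = st x := by
  intro x hx
  have hh := h x
  unfold iev Prog.comb at hh
  simpa [hx] using hh

lemma tmplCount_cons (c : LConf T) (G : Multiset (LConf T)) (θ : T) :
    tmplCount (c ::ₘ G) θ = tmplCount G θ + if c.tmpl = θ then 1 else 0 := by
  unfold tmplCount
  rw [Multiset.filter_cons]
  by_cases h : c.tmpl = θ <;> simp [h, add_comm]

lemma pair_add (a b : LConf T) (F : Multiset (LConf T)) :
    ({a, b} : Multiset (LConf T)) + F = a ::ₘ b ::ₘ F := by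
  rw [Multiset.insert_eq_cons, Multiset.cons_add, Multiset.singleton_add]

theorem sim (P : Prog T) (β n : ℕ) (cfg : ℕ → GConf T) (lab : ℕ → Lab T)
    (hexec : IsExec P n cfg lab) :
    ∀ i, i ≤ n → ∀ σfree : Var → T → Fin β → Val,
      (∃ N σ, PReach P β (markOf N) σ ∧
          SimInv P β (cfg i).1 (cfg i).2 σ N σfree (fun θ => cnt lab θ i)) ∨
      (∃ m σ, PReach P β m σ ∧ (m ∩ Ssafe T β).Nonempty) ∨
      ((∃ m σ, PReach P β m σ ∧ (m ∩ Sbound T β).Nonempty) ∧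
        ∃ i' ≤ n, ∃ θ, β < tmplCount (cfg i').1 θ) := by
  intro i
  induction i with
  | zero =>
      intro _ σfree
      left
      obtain ⟨s, hs0⟩ := hexec.1
      refine ⟨{((⟨Rem.run (P.body P.main), P.main, none, s⟩ : LConf T), (none : Option (Fin β)))},
        (fun v => match v with
          | IVar.glob y => (cfg 0).2 y
          | IVar.inst y _ none => s y
          | IVar.inst y θ₀ (some k) => σfree y θ₀ k
          | IVar.idv _ _ => 0), ?_, ?_⟩
      · rw [mark_init]
        exact PReach.init _
      · constructor
        · rw [hs0]; simp
        · simp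
        · intro θ₀ k₀
          simp [cnt]
        · intro d hd y
          rw [Multiset.mem_singleton] at hd
          subst hd
          unfold iev Prog.comb
          by_cases hy : P.isGlobal y = true
          · simp [hy]
          · have hy' : P.isGlobal y = false := by simpa using hy
            simp [hy']
        · intro y θ₀ k₀ _
          rfl
        · intro d hd
          rw [Multiset.mem_singleton] at hd
          subst hd
          simp
  | succ i ih =>
      intro hsn σfree
      have hin : i ≤ n := Nat.le_of_succ_le hsn
      have hstep := hexec.2 i (Nat.lt_of_succ_le hsn)
      obtain ⟨M₁, M₁', F, hM1, hM1', hbs⟩ := step_flat hstep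
      generalize hlab : lab i = l at hbs
      generalize hg1 : (cfg i).2 = g1 at hbs
      generalize hg2 : (cfg (i+1)).2 = g2 at hbs
      have hlne : ∀ θ'' : T, (Lab.atomic : Lab T) ≠ Lab.forkL θ'' := fun _ h => by cases h
      have hjne : ∀ θ'' : T, (Lab.joinL : Lab T) ≠ Lab.forkL θ'' := fun _ h => by cases h
      cases hbs with
      | assume_ h =>
          rename_i e X θ t s
          rcases ih hin σfree with ⟨N, σ, hreach, hinv⟩ | hbad | hbad
          · rw [hg1, hM1, Multiset.singleton_add] at hinv
            obtain ⟨kh, N₀, rfl, hF⟩ := map_fst_cons_decomp hinv.hM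
            have hs := hinv.hstate _ (Multiset.mem_cons_self _ _)
            have hiev : iev P σ θ kh = P.comb g1 s := funext hs
            have hgd : e (iev P σ θ kh) := by rw [hiev]; exact h
            cases X with
            | run C' =>
                have hres := sim_local (σ' := σ) (g' := g1) (s' := s) hreach hinv
                  (PTrans.assume_ e (Rem.run C') θ kh) ⟨rfl, hgd⟩
                  (fun hh => by cases hh)
                  (glob_of_state hs) (loc_of_state hs) (fun _ _ _ _ => rfl)
                left
                refine ⟨_, σ, hres.1, ?_⟩
                rw [hM1', Multiset.singleton_add,
                  cnt_succ_eq (fun θ'' => by rw [hlab]; exact hlne θ'')]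
                exact hres.2
            | term =>
                exact Or.inr (Or.inl (sim_divert hreach (PTrans.assume_ e Rem.fail θ kh)
                  (mem_markOf_loc.2 ⟨_, Multiset.mem_cons_self _ _, rfl, rfl, rfl⟩)
                  ⟨rfl, hgd⟩))
            | fail =>
                exact Or.inr (Or.inl (sim_divert hreach (PTrans.assume_ e Rem.fail θ kh)
                  (mem_markOf_loc.2 ⟨_, Multiset.mem_cons_self _ _, rfl, rfl, rfl⟩)
                  ⟨rfl, hgd⟩))
          · exact Or.inr (Or.inl hbad)
          · exact Or.inr (Or.inr hbad)
      | assert₁ h =>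
          rename_i e X θ t s
          rcases ih hin σfree with ⟨N, σ, hreach, hinv⟩ | hbad | hbad
          · rw [hg1, hM1, Multiset.singleton_add] at hinv
            obtain ⟨kh, N₀, rfl, hF⟩ := map_fst_cons_decomp hinv.hM
            have hs := hinv.hstate _ (Multiset.mem_cons_self _ _)
            have hiev : iev P σ θ kh = P.comb g1 s := funext hs
            have hgd : e (iev P σ θ kh) := by rw [hiev]; exact h
            cases X with
            | run C' =>
                have hres := sim_local (σ' := σ) (g' := g1) (s' := s) hreach hinv
                  (PTrans.assert₁ e (Rem.run C') θ kh) ⟨rfl, hgd⟩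
                  (fun hh => by cases hh)
                  (glob_of_state hs) (loc_of_state hs) (fun _ _ _ _ => rfl)
                left
                refine ⟨_, σ, hres.1, ?_⟩
                rw [hM1', Multiset.singleton_add,
                  cnt_succ_eq (fun θ'' => by rw [hlab]; exact hlne θ'')]
                exact hres.2
            | term =>
                exact Or.inr (Or.inl (sim_divert hreach (PTrans.assert₁ e Rem.fail θ kh)
                  (mem_markOf_loc.2 ⟨_, Multiset.mem_cons_self _ _, rfl, rfl, rfl⟩)
                  ⟨rfl, hgd⟩))
            | fail =>
                exact Or.inr (Or.inl (sim_divert hreach (PTrans.assert₁ e Rem.fail θ kh)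
                  (mem_markOf_loc.2 ⟨_, Multiset.mem_cons_self _ _, rfl, rfl, rfl⟩)
                  ⟨rfl, hgd⟩))
          · exact Or.inr (Or.inl hbad)
          · exact Or.inr (Or.inr hbad)
      | while₂ h =>
          rename_i e C X θ t s
          rcases ih hin σfree with ⟨N, σ, hreach, hinv⟩ | hbad | hbad
          · rw [hg1, hM1, Multiset.singleton_add] at hinv
            obtain ⟨kh, N₀, rfl, hF⟩ := map_fst_cons_decomp hinv.hM
            have hs := hinv.hstate _ (Multiset.mem_cons_self _ _)
            have hiev : iev P σ θ kh = P.comb g1 s := funext hs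
            have hgd : ¬ e (iev P σ θ kh) := by rw [hiev]; exact h
            cases X with
            | run C' =>
                have hres := sim_local (σ' := σ) (g' := g1) (s' := s) hreach hinv
                  (PTrans.while₂ e C (Rem.run C') θ kh) ⟨rfl, hgd⟩
                  (fun hh => by cases hh)
                  (glob_of_state hs) (loc_of_state hs) (fun _ _ _ _ => rfl)
                left
                refine ⟨_, σ, hres.1, ?_⟩
                rw [hM1', Multiset.singleton_add,
                  cnt_succ_eq (fun θ'' => by rw [hlab]; exact hlne θ'')]
                exact hres.2
            | term =>
                exact Or.inr (Or.inl (sim_divert hreach (PTrans.while₂ e C Rem.fail θ kh)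
                  (mem_markOf_loc.2 ⟨_, Multiset.mem_cons_self _ _, rfl, rfl, rfl⟩)
                  ⟨rfl, hgd⟩))
            | fail =>
                exact Or.inr (Or.inl (sim_divert hreach (PTrans.while₂ e C Rem.fail θ kh)
                  (mem_markOf_loc.2 ⟨_, Multiset.mem_cons_self _ _, rfl, rfl, rfl⟩)
                  ⟨rfl, hgd⟩))
          · exact Or.inr (Or.inl hbad)
          · exact Or.inr (Or.inr hbad)
      | assert₂ h =>
          rename_i e X θ t s
          rcases ih hin σfree with ⟨N, σ, hreach, hinv⟩ | hbad | hbad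
          · rw [hg1, hM1, Multiset.singleton_add] at hinv
            obtain ⟨kh, N₀, rfl, hF⟩ := map_fst_cons_decomp hinv.hM
            have hs := hinv.hstate _ (Multiset.mem_cons_self _ _)
            have hiev : iev P σ θ kh = P.comb g1 s := funext hs
            exact Or.inr (Or.inl (sim_divert hreach (PTrans.assert₂ e X θ kh)
              (mem_markOf_loc.2 ⟨_, Multiset.mem_cons_self _ _, rfl, rfl, rfl⟩)
              ⟨rfl, by rw [hiev]; exact h⟩))
          · exact Or.inr (Or.inl hbad)
          · exact Or.inr (Or.inr hbad)
      | ite₁ h =>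
          rename_i e C₁ C₂ X θ t s
          rcases ih hin σfree with ⟨N, σ, hreach, hinv⟩ | hbad | hbad
          · rw [hg1, hM1, Multiset.singleton_add] at hinv
            obtain ⟨kh, N₀, rfl, hF⟩ := map_fst_cons_decomp hinv.hM
            have hs := hinv.hstate _ (Multiset.mem_cons_self _ _)
            have hiev : iev P σ θ kh = P.comb g1 s := funext hs
            have hres := sim_local (σ' := σ) (g' := g1) (s' := s) hreach hinv
              (PTrans.ite₁ e C₁ C₂ X θ kh) ⟨rfl, by rw [hiev]; exact h⟩
              (after_ne_term C₁ X)
              (glob_of_state hs) (loc_of_state hs) (fun _ _ _ _ => rfl)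
            left
            refine ⟨_, σ, hres.1, ?_⟩
            rw [hM1', Multiset.singleton_add,
              cnt_succ_eq (fun θ'' => by rw [hlab]; exact hlne θ'')]
            exact hres.2
          · exact Or.inr (Or.inl hbad)
          · exact Or.inr (Or.inr hbad)
      | ite₂ h =>
          rename_i e C₁ C₂ X θ t s
          rcases ih hin σfree with ⟨N, σ, hreach, hinv⟩ | hbad | hbad
          · rw [hg1, hM1, Multiset.singleton_add] at hinv
            obtain ⟨kh, N₀, rfl, hF⟩ := map_fst_cons_decomp hinv.hM
            have hs := hinv.hstate _ (Multiset.mem_cons_self _ _)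
            have hiev : iev P σ θ kh = P.comb g1 s := funext hs
            have hres := sim_local (σ' := σ) (g' := g1) (s' := s) hreach hinv
              (PTrans.ite₂ e C₁ C₂ X θ kh) ⟨rfl, by rw [hiev]; exact h⟩
              (after_ne_term C₂ X)
              (glob_of_state hs) (loc_of_state hs) (fun _ _ _ _ => rfl)
            left
            refine ⟨_, σ, hres.1, ?_⟩
            rw [hM1', Multiset.singleton_add,
              cnt_succ_eq (fun θ'' => by rw [hlab]; exact hlne θ'')]
            exact hres.2
          · exact Or.inr (Or.inl hbad)
          · exact Or.inr (Or.inr hbad)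
      | while₁ h =>
          rename_i e C X θ t s
          rcases ih hin σfree with ⟨N, σ, hreach, hinv⟩ | hbad | hbad
          · rw [hg1, hM1, Multiset.singleton_add] at hinv
            obtain ⟨kh, N₀, rfl, hF⟩ := map_fst_cons_decomp hinv.hM
            have hs := hinv.hstate _ (Multiset.mem_cons_self _ _)
            have hiev : iev P σ θ kh = P.comb g1 s := funext hs
            have hres := sim_local (σ' := σ) (g' := g1) (s' := s) hreach hinv
              (PTrans.while₁ e C X θ kh) ⟨rfl, by rw [hiev]; exact h⟩
              (after_ne_term C _)
              (glob_of_state hs) (loc_of_state hs) (fun _ _ _ _ => rfl)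
            left
            refine ⟨_, σ, hres.1, ?_⟩
            rw [hM1', Multiset.singleton_add,
              cnt_succ_eq (fun θ'' => by rw [hlab]; exact hlne θ'')]
            exact hres.2
          · exact Or.inr (Or.inl hbad)
          · exact Or.inr (Or.inr hbad)
      | assignGlobal hx =>
          rename_i x e X θ t s
          rcases ih hin σfree with ⟨N, σ, hreach, hinv⟩ | hbad | hbad
          · rw [hg1, hM1, Multiset.singleton_add] at hinv
            obtain ⟨kh, N₀, rfl, hF⟩ := map_fst_cons_decomp hinv.hM
            have hs := hinv.hstate _ (Multiset.mem_cons_self _ _)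
            have hiev : iev P σ θ kh = P.comb g1 s := funext hs
            have hR : assignRel P x e θ kh σ
                (Function.update σ (IVar.glob x) (e (iev P σ θ kh))) := by
              simp [assignRel, hx]
            have hglob : ∀ y, P.isGlobal y = true →
                Function.update σ (IVar.glob x) (e (iev P σ θ kh)) (IVar.glob y)
                  = Function.update g1 x (e (P.comb g1 s)) y := by
              intro y hy
              by_cases hxy : y = x
              · subst hxy
                rw [Function.update_self, Function.update_self, hiev]
              · rw [Function.update_of_ne (by simp [hxy]), Function.update_of_ne hxy]
                exact glob_of_state hs y hy
            have hself : ∀ y, P.isGlobal y = false →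
                Function.update σ (IVar.glob x) (e (iev P σ θ kh)) (IVar.inst y θ kh)
                  = s y := by
              intro y hy
              rw [Function.update_of_ne (by simp)]
              exact loc_of_state hs y hy
            have hother : ∀ y θ'' k'', (θ'', k'') ≠ (θ, kh) →
                Function.update σ (IVar.glob x) (e (iev P σ θ kh)) (IVar.inst y θ'' k'')
                  = σ (IVar.inst y θ'' k'') :=
              fun y θ'' k'' _ => Function.update_of_ne (by simp) _ _
            cases X with
            | run C' =>
                have hres := sim_local (g' := Function.update g1 x (e (P.comb g1 s)))
                  (s' := s) hreach hinv
                  (PTrans.assign x e (Rem.run C') θ kh) hR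
                  (fun hh => by cases hh) hglob hself hother
                left
                refine ⟨_, _, hres.1, ?_⟩
                rw [hM1', Multiset.singleton_add,
                  cnt_succ_eq (fun θ'' => by rw [hlab]; exact hlne θ'')]
                exact hres.2
            | term =>
                exact Or.inr (Or.inl (sim_divert hreach (PTrans.assign x e Rem.fail θ kh)
                  (mem_markOf_loc.2 ⟨_, Multiset.mem_cons_self _ _, rfl, rfl, rfl⟩) hR))
            | fail =>
                exact Or.inr (Or.inl (sim_divert hreach (PTrans.assign x e Rem.fail θ kh)
                  (mem_markOf_loc.2 ⟨_, Multiset.mem_cons_self _ _, rfl, rfl, rfl⟩) hR))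
          · exact Or.inr (Or.inl hbad)
          · exact Or.inr (Or.inr hbad)
      | assignLocal hx =>
          rename_i x e X θ t s
          rcases ih hin σfree with ⟨N, σ, hreach, hinv⟩ | hbad | hbad
          · rw [hg1, hM1, Multiset.singleton_add] at hinv
            obtain ⟨kh, N₀, rfl, hF⟩ := map_fst_cons_decomp hinv.hM
            have hs := hinv.hstate _ (Multiset.mem_cons_self _ _)
            have hiev : iev P σ θ kh = P.comb g1 s := funext hs
            have hR : assignRel P x e θ kh σ
                (Function.update σ (IVar.inst x θ kh) (e (iev P σ θ kh))) := by
              simp [assignRel, hx]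
            have hglob : ∀ y, P.isGlobal y = true →
                Function.update σ (IVar.inst x θ kh) (e (iev P σ θ kh)) (IVar.glob y)
                  = g1 y := by
              intro y hy
              rw [Function.update_of_ne (by simp)]
              exact glob_of_state hs y hy
            have hself : ∀ y, P.isGlobal y = false →
                Function.update σ (IVar.inst x θ kh) (e (iev P σ θ kh)) (IVar.inst y θ kh)
                  = Function.update s x (e (P.comb g1 s)) y := by
              intro y hy
              by_cases hxy : y = x
              · subst hxy
                rw [Function.update_self, Function.update_self, hiev]
              · rw [Function.update_of_ne (by simp [hxy]), Function.update_of_ne hxy]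
                exact loc_of_state hs y hy
            have hother : ∀ y θ'' k'', (θ'', k'') ≠ (θ, kh) →
                Function.update σ (IVar.inst x θ kh) (e (iev P σ θ kh)) (IVar.inst y θ'' k'')
                  = σ (IVar.inst y θ'' k'') := by
              intro y θ'' k'' hne
              refine Function.update_of_ne (fun hh => ?_) _ _
              obtain ⟨-, h2, h3⟩ := IVar.inst.inj hh
              exact hne (by rw [h2, h3])
            cases X with
            | run C' =>
                have hres := sim_local (g' := g1)
                  (s' := Function.update s x (e (P.comb g1 s))) hreach hinv
                  (PTrans.assign x e (Rem.run C') θ kh) hR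
                  (fun hh => by cases hh) hglob hself hother
                left
                refine ⟨_, _, hres.1, ?_⟩
                rw [hM1', Multiset.singleton_add,
                  cnt_succ_eq (fun θ'' => by rw [hlab]; exact hlne θ'')]
                exact hres.2
            | term =>
                exact Or.inr (Or.inl (sim_divert hreach (PTrans.assign x e Rem.fail θ kh)
                  (mem_markOf_loc.2 ⟨_, Multiset.mem_cons_self _ _, rfl, rfl, rfl⟩) hR))
            | fail =>
                exact Or.inr (Or.inl (sim_divert hreach (PTrans.assign x e Rem.fail θ kh)
                  (mem_markOf_loc.2 ⟨_, Multiset.mem_cons_self _ _, rfl, rfl, rfl⟩) hR))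
          · exact Or.inr (Or.inl hbad)
          · exact Or.inr (Or.inr hbad)
      | join =>
          rename_i e X θ t s θ' s'
          rcases ih hin σfree with ⟨N, σ, hreach, hinv⟩ | hbad | hbad
          · exfalso
            have hmem : (⟨Rem.term, θ', some (e (P.comb g1 s)), s'⟩ : LConf T) ∈
                N.map Prod.fst := by
              rw [hinv.hM, hM1, pair_add]
              exact Multiset.mem_cons_of_mem (Multiset.mem_cons_self _ _)
            obtain ⟨d, hd, hdeq⟩ := Multiset.mem_map.1 hmem
            exact hinv.hnt d hd (by rw [hdeq])
          · exact Or.inr (Or.inl hbad)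
          · exact Or.inr (Or.inr hbad)
      | fork =>
          rename_i e θ' X θ t s s'
          rcases ih hin
              (fun y θ₀ k => if θ₀ = θ' ∧ (k : ℕ) = cnt lab θ' i then s' y else σfree y θ₀ k)
            with ⟨N, σ, hreach, hinv⟩ | hbad | hbad
          · rw [hg1, hM1, Multiset.singleton_add] at hinv
            obtain ⟨kh, N₀, rfl, hF⟩ := map_fst_cons_decomp hinv.hM
            have hs := hinv.hstate _ (Multiset.mem_cons_self _ _)
            have hiev : iev P σ θ kh = P.comb g1 s := funext hs
            have hf : (θ, kh) ∉ N₀.map (fun d => (d.1.tmpl, d.2)) := by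
              have hnd := hinv.hnd
              rw [Multiset.map_cons] at hnd
              exact (Multiset.nodup_cons.1 (by simpa using hnd)).1
            have hkeysN : ∀ θ₀ (k₀ : Fin β), ((θ₀, some k₀) ∈
                (((⟨Rem.after (Cmd.fork e θ') X, θ, t, s⟩ : LConf T), kh) ::ₘ N₀).map
                  (fun d => (d.1.tmpl, d.2)) ↔ (k₀ : ℕ) < cnt lab θ₀ i) := hinv.hkeys
            by_cases hβ : cnt lab θ' i < β
            · set k' : Fin β := ⟨cnt lab θ' i, hβ⟩ with hk'
              have hfreshk : (θ', some k') ∉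
                  (((⟨Rem.after (Cmd.fork e θ') X, θ, t, s⟩ : LConf T), kh) ::ₘ N₀).map
                    (fun d => (d.1.tmpl, d.2)) := by
                rw [hkeysN]; simp [hk']
              have hlt : ∀ j : Fin β, j < k' → (θ', some j) ∈
                  (((⟨Rem.after (Cmd.fork e θ') X, θ, t, s⟩ : LConf T), kh) ::ₘ N₀).map
                    (fun d => (d.1.tmpl, d.2)) := by
                intro j hj
                rw [hkeysN]
                simpa [hk', Fin.lt_def] using hj
              have hpre : ({PPlace.loc (Rem.after (Cmd.fork e θ') X) θ kh,
                    PPlace.notInUse θ' k'} ∪ (PPlace.inUse θ') '' {j | j < k'}) ⊆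
                  markOf (((⟨Rem.after (Cmd.fork e θ') X, θ, t, s⟩ : LConf T), kh) ::ₘ N₀) := by
                intro p hp
                simp only [Set.mem_union, Set.mem_insert_iff, Set.mem_singleton_iff,
                  Set.mem_image, Set.mem_setOf_eq] at hp
                rcases hp with (rfl | rfl) | ⟨j, hj, rfl⟩
                · exact mem_markOf_loc.2 ⟨_, Multiset.mem_cons_self _ _, rfl, rfl, rfl⟩
                · exact mem_markOf_notInUse.2 hfreshk
                · exact mem_markOf_inUse.2 (hlt j hj)
              have hievup : ∀ (θ₀ : T) (k₀ : Option (Fin β)),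
                  iev P (Function.update σ (IVar.idv θ' k') (e (iev P σ θ kh))) θ₀ k₀
                    = iev P σ θ₀ k₀ := by
                intro θ₀ k₀
                funext y
                unfold iev
                by_cases hy : P.isGlobal y = true
                · simp only [hy, if_true]
                  exact Function.update_of_ne (by simp) _ _
                · have hy' : P.isGlobal y = false := by simpa using hy
                  simp only [hy', Bool.false_eq_true, if_false]
                  exact Function.update_of_ne (by simp) _ _
              cases X with
              | run C'' =>
                  have hstep2 := PReach.step hreach
                    (PTrans.fork e θ' (Rem.run C'') θ kh k') hpre
                    (rfl : forkRel P e θ kh θ' k' σ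
                      (Function.update σ (IVar.idv θ' k') (e (iev P σ θ kh))))
                  have hmark :
                      (markOf (((⟨Rem.after (Cmd.fork e θ') (Rem.run C''), θ, t, s⟩ : LConf T),
                          kh) ::ₘ N₀) \
                        ({PPlace.loc (Rem.after (Cmd.fork e θ') (Rem.run C'')) θ kh,
                          PPlace.notInUse θ' k'} ∪ (PPlace.inUse θ') '' {j | j < k'}))
                      ∪ ({PPlace.loc (Rem.run C'') θ kh,
                          PPlace.loc (Rem.run (P.body θ')) θ' (some k'), PPlace.inUse θ' k'} ∪
                          (PPlace.inUse θ') '' {j | j < k'})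
                      = markOf (((⟨Rem.run C'', θ, t, s⟩ : LConf T), kh) ::ₘ
                          ((⟨Rem.run (P.body θ'), θ', some (e (P.comb g1 s)), s'⟩ : LConf T),
                            some k') ::ₘ N₀) :=
                    mark_fork (c := ⟨Rem.after (Cmd.fork e θ') (Rem.run C''), θ, t, s⟩)
                      (c' := ⟨Rem.run C'', θ, t, s⟩)
                      (cn := ⟨Rem.run (P.body θ'), θ', some (e (P.comb g1 s)), s'⟩)
                      rfl rfl hf hlt
                  rw [hmark] at hstep2
                  left
                  refine ⟨_, _, hstep2, ?_⟩
                  rw [hM1', pair_add]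
                  constructor
                  · simp [hF]
                  · simp only [Multiset.map_cons]
                    refine Multiset.nodup_cons.2 ⟨?_, Multiset.nodup_cons.2 ⟨?_, ?_⟩⟩
                    · intro hmem
                      simp only [Multiset.mem_cons] at hmem
                      rcases hmem with hmem | hmem
                      · exact hfreshk (by
                          rw [← hmem]
                          exact Multiset.mem_map.2 ⟨_, Multiset.mem_cons_self _ _, rfl⟩)
                      · exact hf hmem
                    · intro hmem
                      exact hfreshk (by
                        rw [Multiset.map_cons]
                        exact Multiset.mem_cons_of_mem hmem)
                    · have hnd := hinv.hnd
                      rw [Multiset.map_cons] at hnd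
                      exact (Multiset.nodup_cons.1 hnd).2
                  · intro θ₀ k₀
                    rw [cnt_succ, hlab]
                    simp only [Multiset.map_cons, Multiset.mem_cons]
                    by_cases hθ : θ₀ = θ'
                    · subst hθ
                      rw [if_pos rfl]
                      constructor
                      · rintro (hh | hh | hh)
                        · have := (hkeysN θ₀ k₀).1 (by
                            rw [hh]
                            exact Multiset.mem_map.2 ⟨_, Multiset.mem_cons_self _ _, rfl⟩)
                          omega
                        · obtain ⟨-, h2⟩ := Prod.mk.inj hh
                          obtain h3 := Option.some.inj h2
                          rw [h3]
                          exact Nat.lt_succ_self _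
                        · have := (hkeysN θ₀ k₀).1 (by
                            rw [Multiset.map_cons]
                            exact Multiset.mem_cons_of_mem hh)
                          omega
                      · intro hk
                        rcases Nat.lt_succ_iff_lt_or_eq.1 hk with hk | hk
                        · have := (hkeysN θ₀ k₀).2 hk
                          simp only [Multiset.map_cons, Multiset.mem_cons] at this
                          rcases this with hh | hh
                          · exact Or.inl hh
                          · exact Or.inr (Or.inr hh)
                        · refine Or.inr (Or.inl ?_)
                          have hkk : k₀ = k' := Fin.ext (show (k₀ : ℕ) = ((k' : Fin β) : ℕ) from hk)
                          rw [hkk]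
                    · rw [if_neg (fun hh => hθ (Lab.forkL.inj hh).symm), add_zero]
                      constructor
                      · rintro (hh | hh | hh)
                        · exact (hkeysN θ₀ k₀).1 (by
                            rw [hh]
                            exact Multiset.mem_map.2 ⟨_, Multiset.mem_cons_self _ _, rfl⟩)
                        · obtain ⟨h1, -⟩ := Prod.mk.inj hh
                          exact absurd h1 hθ
                        · exact (hkeysN θ₀ k₀).1 (by
                            rw [Multiset.map_cons]
                            exact Multiset.mem_cons_of_mem hh)
                      · intro hk
                        have := (hkeysN θ₀ k₀).2 hk
                        simp only [Multiset.map_cons, Multiset.mem_cons] at this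
                        rcases this with hh | hh
                        · exact Or.inl hh
                        · exact Or.inr (Or.inr hh)
                  · intro d hd y
                    rcases Multiset.mem_cons.1 hd with rfl | hd
                    · show iev P _ θ kh y = P.comb g1 s y
                      rw [hievup]
                      exact hs y
                    rcases Multiset.mem_cons.1 hd with rfl | hd
                    · show iev P _ θ' (some k') y = P.comb g1 s' y
                      rw [hievup]
                      unfold iev Prog.comb
                      by_cases hy : P.isGlobal y = true
                      · simp only [hy, if_true]
                        exact glob_of_state hs y hy
                      · have hy' : P.isGlobal y = false := by simpa using hy
                        simp only [hy', Bool.false_eq_true, if_false]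
                        rw [hinv.hfresh y θ' k' (le_refl _), if_pos ⟨rfl, rfl⟩]
                    · rw [hievup]
                      exact hinv.hstate d (Multiset.mem_cons_of_mem hd) y
                  · intro y θ₀ k₀ hk
                    rw [Function.update_of_ne (by simp)]
                    have hle : cnt lab θ₀ i ≤ (k₀ : ℕ) := by
                      have : cnt lab θ₀ i ≤ cnt lab θ₀ (i+1) := by
                        rw [cnt_succ]; omega
                      omega
                    rw [hinv.hfresh y θ₀ k₀ hle, if_neg ?_]
                    rintro ⟨rfl, h2⟩
                    rw [cnt_succ, hlab, if_pos rfl] at hk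
                    omega
                  · intro d hd
                    rcases Multiset.mem_cons.1 hd with rfl | hd
                    · exact fun hh => by cases hh
                    rcases Multiset.mem_cons.1 hd with rfl | hd
                    · exact fun hh => by cases hh
                    · exact hinv.hnt d (Multiset.mem_cons_of_mem hd)
              | term =>
                  have hstep2 := PReach.step hreach
                    (PTrans.fork e θ' Rem.fail θ kh k') hpre rfl
                  exact Or.inr (Or.inl ⟨_, _, hstep2,
                    ⟨PPlace.loc Rem.fail θ kh,
                      Set.mem_union_right _ (Set.mem_union_left _ (Set.mem_insert _ _)),
                      θ, kh, rfl⟩⟩)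
              | fail =>
                  have hstep2 := PReach.step hreach
                    (PTrans.fork e θ' Rem.fail θ kh k') hpre rfl
                  exact Or.inr (Or.inl ⟨_, _, hstep2,
                    ⟨PPlace.loc Rem.fail θ kh,
                      Set.mem_union_right _ (Set.mem_union_left _ (Set.mem_insert _ _)),
                      θ, kh, rfl⟩⟩)
            · have hall : ∀ k : Fin β, (θ', some k) ∈
                  (((⟨Rem.after (Cmd.fork e θ') X, θ, t, s⟩ : LConf T), kh) ::ₘ N₀).map
                    (fun d => (d.1.tmpl, d.2)) :=
                fun k => (hkeysN θ' k).2 (lt_of_lt_of_le k.2 (not_lt.1 hβ))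
              have hpre2 : ({PPlace.loc (Rem.after (Cmd.fork e θ') X) θ kh} ∪
                  (PPlace.inUse θ') '' Set.univ) ⊆
                  markOf (((⟨Rem.after (Cmd.fork e θ') X, θ, t, s⟩ : LConf T), kh) ::ₘ N₀) := by
                intro p hp
                simp only [Set.mem_union, Set.mem_singleton_iff, Set.mem_image, Set.mem_univ,
                  true_and] at hp
                rcases hp with rfl | ⟨k, rfl⟩
                · exact mem_markOf_loc.2 ⟨_, Multiset.mem_cons_self _ _, rfl, rfl, rfl⟩
                · exact mem_markOf_inUse.2 (hall k)
              have hstep2 := PReach.step hreach (PTrans.insufficiency e θ' X θ kh) hpre2 rfl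
              refine Or.inr (Or.inr ⟨⟨_, _, hstep2,
                ⟨PPlace.insuff θ', Set.mem_union_right _ rfl, θ', rfl⟩⟩, ⟨i+1, hsn, θ', ?_⟩⟩)
              have h1 := count_ge hinv.hnd hall
              rw [hinv.hM, tmplCount_cons] at h1
              rw [hM1', pair_add, tmplCount_cons, tmplCount_cons]
              simp only at h1 ⊢
              by_cases hθθ : θ = θ' <;> simp [hθθ] at h1 ⊢ <;> omega
          · exact Or.inr (Or.inl hbad)
          · exact Or.inr (Or.inr hbad)

end Conc


open Conc in
/-- if `prog` has an erroneous execution of thread width at most `w`, then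
Algorithm 1 terminates with output 'incorrect' after at most `w` iterations: there is a
first thread limit `k ≤ w` at which the safety check fails, and at every earlier limit
the safety check succeeds while the bound check fails (so the limit is incremented). -/
theorem algorithm1_terminates_on_incorrect {T : Type} [DecidableEq T] (P : Prog T)
    (w : ℕ)
    (herr : ∃ n cfg lab, IsExec P n cfg lab ∧
        (∀ i ≤ n, ∀ θ : T, tmplCount (cfg i).1 θ ≤ w) ∧
        ∃ i ≤ n, ∃ c ∈ (cfg i).1, c.rem = Rem.fail) :
    ∃ k, 1 ≤ k ∧ k ≤ w ∧ ¬ Satisfies P k (Ssafe T k) ∧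
      ∀ j, 1 ≤ j → j < k →
        Satisfies P j (Ssafe T j) ∧ ¬ Satisfies P j (Sbound T j) := by 
  classical
  obtain ⟨n, cfg, lab, hexec, hwidth, ie, hien, c, hc, hcfail⟩ := herr
  have hmaster : ∀ β : ℕ, (∃ m σ, PReach P β m σ ∧ (m ∩ Ssafe T β).Nonempty) ∨
      ((∃ m σ, PReach P β m σ ∧ (m ∩ Sbound T β).Nonempty) ∧
        ∃ i' ≤ n, ∃ θ, β < tmplCount (cfg i').1 θ) := by
    intro β
    rcases sim P β n cfg lab hexec ie hien (fun _ _ _ => 0) with ⟨N, σ, hreach, hinv⟩ | hbad | hbad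
    · left
      have hmem : c ∈ N.map Prod.fst := by rw [hinv.hM]; exact hc
      obtain ⟨d, hd, hdeq⟩ := Multiset.mem_map.1 hmem
      refine ⟨_, σ, hreach, ⟨PPlace.loc Rem.fail d.1.tmpl d.2, ?_, d.1.tmpl, d.2, rfl⟩⟩
      exact mem_markOf_loc.2 ⟨d, hd, by rw [hdeq, hcfail], rfl, rfl⟩
    · exact Or.inl hbad
    · exact Or.inr hbad
  have hw1 : 1 ≤ w := by
    have h0 := hwidth 0 (Nat.zero_le n) P.main
    obtain ⟨s, hs0⟩ := hexec.1
    rw [hs0] at h0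
    have h1 : tmplCount
        ({(⟨Rem.run (P.body P.main), P.main, none, s⟩ : LConf T)} : Multiset (LConf T))
        P.main = 1 := by
      unfold tmplCount
      rw [Multiset.filter_singleton, if_pos rfl]
      rfl
    omega
  have hQw : ¬ Satisfies P w (Ssafe T w) := by
    rcases hmaster w with hbad | hbad
    · exact fun hsat => hsat hbad
    · obtain ⟨-, i', hi', θ, hcount⟩ := hbad
      exact absurd (hwidth i' hi' θ) (by omega)
  have hex : ∃ k, 1 ≤ k ∧ ¬ Satisfies P k (Ssafe T k) := ⟨w, hw1, hQw⟩
  refine ⟨Nat.find hex, (Nat.find_spec hex).1, Nat.find_min' hex ⟨hw1, hQw⟩,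
    (Nat.find_spec hex).2, ?_⟩
  intro j hj1 hjk
  have hsatj : Satisfies P j (Ssafe T j) := by
    by_contra hns
    exact Nat.find_min hex hjk ⟨hj1, hns⟩
  refine ⟨hsatj, ?_⟩
  rcases hmaster j with hbad | hbad
  · exact absurd hbad hsatj
  · exact fun hsat => hsat hbad.1
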